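/- Let T, T_1, ..., T_m be real-valued random variables such that (T, T_1,...,T_m) is exchangeable and almost surely all values are distinct. Define the Monte Carlo p-value p̂ = (1 + #{i : T < T_i})/(m+1). Then for every α ∈ [0,1], P(p̂ ≤ α) ≤ α. -/

import Mathlib

/-!
Let `r i` be the number of coordinates strictly above the `i`-th one, so that
`p̂ = (1 + r 0) / (m + 1)`. Exchangeability gives every `r i` the same law, and when the
coordinates are distinct `i ↦ r i` is a bijection onto `{0, …, m}`. Summing over `i`,
`(m + 1) P(p̂ ≤ α) = #{k ≤ m | (1 + k) / (m + 1) ≤ α} ≤ (m + 1) α`.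
-/

open MeasureTheory Finset ENNReal

namespace PermutationTest

section Rank

variable {ι β : Type*} [Fintype ι] [LinearOrder β]

def rank (y : ι → β) (i : ι) : ℕ := #{j | y i < y j}

lemma rank_lt_rank_of_lt {y : ι → β} {i j : ι} (h : y i < y j) : rank y j < rank y i := by
  refine card_lt_card ⟨fun k hk => ?_, fun hsub => ?_⟩
  · simp only [mem_filter, mem_univ, true_and] at hk ⊢
    exact h.trans hk
  · exact lt_irrefl _ (mem_filter.mp (hsub (mem_filter.mpr ⟨mem_univ j, h⟩))).2

lemma rank_injective {y : ι → β} (hy : Function.Injective y) : Function.Injective (rank y) := by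
  intro i j hij
  by_contra hne
  rcases lt_or_gt_of_ne (hy.ne hne) with h | h
  · exact (rank_lt_rank_of_lt h).ne' hij
  · exact (rank_lt_rank_of_lt h).ne hij

lemma rank_lt_card (y : ι → β) (i : ι) : rank y i < Fintype.card ι :=
  card_lt_card (filter_ssubset.mpr ⟨i, mem_univ _, lt_irrefl _⟩)

lemma image_rank {y : ι → β} (hy : Function.Injective y) :
    univ.image (rank y) = range (Fintype.card ι) := by
  refine eq_of_subset_of_card_le (fun k hk => ?_) ?_
  · obtain ⟨i, -, rfl⟩ := mem_image.mp hk
    exact mem_range.mpr (rank_lt_card y i)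
  · rw [card_range, card_image_of_injective _ (rank_injective hy), card_univ]

lemma card_filter_rank {y : ι → β} (hy : Function.Injective y) (p : ℕ → Prop)
    [DecidablePred p] :
    #{i | p (rank y i)} = #{k ∈ range (Fintype.card ι) | p k} := by
  rw [← image_rank hy, filter_image, card_image_of_injective _ (rank_injective hy)]

lemma rank_comp_perm (y : ι → β) (σ : Equiv.Perm ι) (i : ι) :
    rank (y ∘ σ) i = rank y (σ i) := by
  simp only [rank, card_filter]
  exact Equiv.sum_comp σ fun j => if y (σ i) < y j then 1 else 0

lemma rank_cons_zero {n : ℕ} (a : β) (b : Fin n → β) :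
    rank (Fin.cons a b : Fin (n + 1) → β) 0 = #{j | a < b j} := by
  simp only [rank, card_filter, Fin.sum_univ_succ, Fin.cons_zero, Fin.cons_succ, lt_irrefl,
    if_false, zero_add]

variable [TopologicalSpace β] [OrderClosedTopology β] [SecondCountableTopology β]
  [MeasurableSpace β] [OpensMeasurableSpace β]

lemma measurable_rank (i : ι) : Measurable fun y : ι → β => rank y i := by
  simp only [rank, card_filter]
  exact measurable_sum _ fun j _ => Measurable.ite
    (measurableSet_lt (measurable_pi_apply i) (measurable_pi_apply j))
    measurable_const measurable_const

variable {Ω : Type*} [MeasurableSpace Ω] {μ : Measure Ω} {X : Ω → ι → β}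

lemma measure_rank_eq (hX : Measurable X)
    (hexch : ∀ σ : Equiv.Perm ι, μ.map (fun ω => X ω ∘ σ) = μ.map X)
    (p : ℕ → Prop) (i j : ι) :
    μ {ω | p (rank (X ω) i)} = μ {ω | p (rank (X ω) j)} := by
  classical
  have hA : MeasurableSet {y : ι → β | p (rank y j)} := measurable_rank j trivial
  have hσ : Measurable fun ω => X ω ∘ Equiv.swap j i :=
    measurable_pi_lambda _ fun k => measurable_pi_apply _ |>.comp hX
  calc μ {ω | p (rank (X ω) i)}
        = μ ((fun ω => X ω ∘ Equiv.swap j i) ⁻¹' {y | p (rank y j)}) := by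
        simp only [Set.preimage_ofPred_eq, rank_comp_perm, Equiv.swap_apply_left]
    _ = μ (X ⁻¹' {y | p (rank y j)}) := by
        rw [← Measure.map_apply hσ hA, hexch, Measure.map_apply hX hA]

lemma card_mul_measure_rank [IsProbabilityMeasure μ] (hX : Measurable X)
    (hexch : ∀ σ : Equiv.Perm ι, μ.map (fun ω => X ω ∘ σ) = μ.map X)
    (hinj : ∀ᵐ ω ∂μ, Function.Injective (X ω)) (p : ℕ → Prop) [DecidablePred p]
    (i : ι) :
    Fintype.card ι * μ {ω | p (rank (X ω) i)} = #{k ∈ range (Fintype.card ι) | p k} := by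
  have hE : ∀ j, MeasurableSet {ω | p (rank (X ω) j)} := fun j =>
    measurable_rank j trivial |>.preimage hX
  calc Fintype.card ι * μ {ω | p (rank (X ω) i)}
        = ∑ j, μ {ω | p (rank (X ω) j)} := by
        simp only [measure_rank_eq hX hexch p _ i, sum_const, card_univ, nsmul_eq_mul]
    _ = ∫⁻ ω, ∑ j, {ω | p (rank (X ω) j)}.indicator 1 ω ∂μ := by
        rw [lintegral_finsetSum _ fun j _ => measurable_one.indicator (hE j)]
        simp only [lintegral_indicator_one (hE _)]
    _ = ∫⁻ _, (#{k ∈ range (Fintype.card ι) | p k} : ℝ≥0∞) ∂μ := by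
        refine lintegral_congr_ae (hinj.mono fun ω hω => ?_)
        simp only [Set.indicator_apply, Set.mem_ofPred_eq, Pi.one_apply, sum_boole,
          card_filter_rank hω]
    _ = #{k ∈ range (Fintype.card ι) | p k} := by simp

end Rank

lemma card_filter_range_div_le (n : ℕ) {α : ℝ} (hα : 0 ≤ α) :
    (#{k ∈ range n | (1 + ((k : ℕ) : ℝ)) / n ≤ α} : ℝ) ≤ n * α := by
  have hsub : {k ∈ range n | (1 + ((k : ℕ) : ℝ)) / n ≤ α} ⊆ range ⌊n * α⌋₊ := by
    intro k hk
    obtain ⟨hkn, hkα⟩ := mem_filter.mp hk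
    have hn : (0 : ℝ) < n := Nat.cast_pos.mpr (Nat.zero_lt_of_lt (mem_range.mp hkn))
    rw [div_le_iff₀ hn] at hkα
    exact mem_range.mpr (Nat.le_floor (by push_cast; linarith))
  calc (#{k ∈ range n | (1 + ((k : ℕ) : ℝ)) / n ≤ α} : ℝ) ≤ ⌊n * α⌋₊ := by
        exact_mod_cast (card_le_card hsub).trans (card_range _).le
    _ ≤ n * α := Nat.floor_le (by positivity)

end PermutationTest

open PermutationTest in
theorem stmt4 {Ω : Type*} [MeasurableSpace Ω] (μ : Measure Ω) [IsProbabilityMeasure μ]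
    {m : ℕ} (T : Ω → ℝ) (Ts : Fin m → Ω → ℝ)
    (hT : Measurable T) (hTs : ∀ i, Measurable (Ts i))
    (hexch : ∀ π : Equiv.Perm (Fin (m + 1)),
      Measure.map (fun ω => (Fin.cons (T ω) (fun j => Ts j ω) : Fin (m + 1) → ℝ) ∘ π) μ
        = Measure.map (fun ω => (Fin.cons (T ω) (fun j => Ts j ω) : Fin (m + 1) → ℝ)) μ)
    (hdist : ∀ᵐ ω ∂μ,
      Function.Injective (Fin.cons (T ω) (fun j => Ts j ω) : Fin (m + 1) → ℝ)) :
    ∀ α : ℝ, 0 ≤ α → α ≤ 1 →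
      μ {ω | (1 + ((Finset.univ.filter fun i => T ω < Ts i ω).card : ℝ)) / (m + 1) ≤ α}
        ≤ ENNReal.ofReal α := by
  intro α hα _
  classical
  have hX : Measurable fun ω => (Fin.cons (T ω) (fun j => Ts j ω) : Fin (m + 1) → ℝ) :=
    measurable_pi_lambda _ fun j => Fin.cases hT hTs j
  have hμ := card_mul_measure_rank hX hexch hdist (fun k => (1 + (k : ℝ)) / (m + 1) ≤ α) 0
  have hcount := ENNReal.ofReal_le_ofReal (card_filter_range_div_le (m + 1) hα)
  rw [ENNReal.ofReal_mul (by positivity), ENNReal.ofReal_natCast, ENNReal.ofReal_natCast] at hcount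
  simp only [rank_cons_zero, Fintype.card_fin] at hμ
  push_cast at hμ hcount
  rw [← hμ] at hcount
  exact (ENNReal.mul_le_mul_iff_right (by simp) (by simp)).mp hcount
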